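/- (Monotonicity in the location parameter of the truncated Gaussian CDF, underlying the post-selection confidence interval construction.) Let σ > 0, a < b and fix x with a < x < b. Then the map μ ↦ F^{[a,b]}_{μ,σ²}(x) = (Φ((x−μ)/σ) − Φ((a−μ)/σ)) / (Φ((b−μ)/σ) − Φ((a−μ)/σ)) is strictly decreasing in μ on ℝ. Consequently, for each p ∈ (0,1) the equation F^{[a,b]}_{μ,σ²}(x) = p has at most one solution μ, so the confidence limits L and R defined by F^{[a,b]}_{L,σ²}(x) = 1 − p/2 and F^{[a,b]}_{R,σ²}(x) = p/2 are uniquely determined when they exist. -/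

import Mathlib

/-!
Standardizing reduces to `σ = 1`, where `F(m) = N(m) / (N(m) + T(m))` with `N(m)` and `T(m)` the
`N(m, 1)` masses of `[a, x]` and `[x, b]`. The Gaussian location family has a strictly monotone
likelihood ratio: `φ(t - m₂) / φ(t - m₁)` is strictly increasing in `t` when `m₁ < m₂`. Integrating
`φ(s - m₁) φ(t - m₂) - φ(s - m₂) φ(t - m₁) > 0` over `s ∈ [a, x]`, `t ∈ [x, b]` gives
`N(m₂) T(m₁) < N(m₁) T(m₂)`, i.e. `F(m₂) < F(m₁)`.
-/

open MeasureTheory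

/-- Standard Gaussian density `φ(x) = (2π)^{-1/2} exp(-x²/2)`. -/
noncomputable def gpdf (x : ℝ) : ℝ := (Real.sqrt (2 * Real.pi))⁻¹ * Real.exp (-x ^ 2 / 2)

/-- Standard Gaussian CDF `Φ(x)`. -/
noncomputable def gcdf (x : ℝ) : ℝ := ∫ t in Set.Iic x, gpdf t

/-- The CDF, evaluated at `x`, of a `N(μ,σ²)` random variable truncated to `[a,b]`. -/
noncomputable def truncGaussCDF (μ σ a b x : ℝ) : ℝ :=
  (gcdf ((x - μ) / σ) - gcdf ((a - μ) / σ)) / (gcdf ((b - μ) / σ) - gcdf ((a - μ) / σ))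

theorem integral_mul_integral_lt_of_mul_lt_mul {f g : ℝ → ℝ} {A X B : ℝ}
    (hf : IntervalIntegrable f volume A B) (hg : IntervalIntegrable g volume A B)
    (hfg : ∀ s t, s < t → g s * f t < f s * g t) (hAX : A < X) (hXB : X < B) :
    (∫ s in A..X, g s) * (∫ t in X..B, f t) < (∫ s in A..X, f s) * (∫ t in X..B, g t) := by
  have hleft : Set.uIcc A X ⊆ Set.uIcc A B :=
    Set.uIcc_subset_uIcc_left (Set.mem_uIcc_of_le hAX.le hXB.le)
  have hright : Set.uIcc X B ⊆ Set.uIcc A B :=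
    Set.uIcc_subset_uIcc_right (Set.mem_uIcc_of_le hAX.le hXB.le)
  have hfAX := hf.mono_set hleft
  have hgAX := hg.mono_set hleft
  have hfXB := hf.mono_set hright
  have hgXB := hg.mono_set hright
  set F := ∫ t in X..B, f t
  set G := ∫ t in X..B, g t
  have inner : ∀ s ∈ Set.Ioo A X, 0 < f s * G - g s * F := by
    intro s hs
    have hsplit : f s * G - g s * F = ∫ t in X..B, (f s * g t - g s * f t) := by
      rw [intervalIntegral.integral_sub (hgXB.const_mul _) (hfXB.const_mul _),
        intervalIntegral.integral_const_mul, intervalIntegral.integral_const_mul]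
    rw [hsplit]
    exact intervalIntegral.intervalIntegral_pos_of_pos_on
      ((hgXB.const_mul _).sub (hfXB.const_mul _))
      (fun t ht => sub_pos.2 (hfg s t (hs.2.trans ht.1))) hXB
  have outer : 0 < ∫ s in A..X, (f s * G - g s * F) :=
    intervalIntegral.intervalIntegral_pos_of_pos_on
      ((hfAX.mul_const _).sub (hgAX.mul_const _)) inner hAX
  rw [intervalIntegral.integral_sub (hfAX.mul_const _) (hgAX.mul_const _),
    intervalIntegral.integral_mul_const, intervalIntegral.integral_mul_const] at outer
  linarith

theorem div_add_lt_div_add_of_mul_lt_mul {N₁ T₁ N₂ T₂ : ℝ} (h₁ : 0 < N₁ + T₁)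
    (h₂ : 0 < N₂ + T₂) (h : N₂ * T₁ < N₁ * T₂) : N₂ / (N₂ + T₂) < N₁ / (N₁ + T₁) := by
  rw [div_lt_div_iff₀ h₂ h₁]
  linear_combination h

theorem gpdf_pos (t : ℝ) : 0 < gpdf t := by
  unfold gpdf
  positivity

theorem continuous_gpdf : Continuous gpdf := by
  unfold gpdf
  fun_prop

theorem integrable_gpdf : Integrable gpdf := by
  have h := (integrable_exp_neg_mul_sq (b := 1 / 2) (by norm_num)).const_mul
    (Real.sqrt (2 * Real.pi))⁻¹
  refine h.congr (Filter.Eventually.of_forall fun t => ?_)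
  simp only [gpdf]
  ring_nf

theorem gcdf_sub_gcdf (u v : ℝ) : gcdf u - gcdf v = ∫ t in v..u, gpdf t :=
  intervalIntegral.integral_Iic_sub_Iic integrable_gpdf.integrableOn integrable_gpdf.integrableOn

theorem gpdf_sub_mul_gpdf_sub_lt {s t m₁ m₂ : ℝ} (hst : s < t) (hm : m₁ < m₂) :
    gpdf (s - m₂) * gpdf (t - m₁) < gpdf (s - m₁) * gpdf (t - m₂) := by
  set c := (Real.sqrt (2 * Real.pi))⁻¹
  have hexp : -(s - m₂) ^ 2 / 2 + -(t - m₁) ^ 2 / 2 < -(s - m₁) ^ 2 / 2 + -(t - m₂) ^ 2 / 2 := by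
    nlinarith [mul_pos (sub_pos.2 hst) (sub_pos.2 hm)]
  calc gpdf (s - m₂) * gpdf (t - m₁)
      = c * c * Real.exp (-(s - m₂) ^ 2 / 2 + -(t - m₁) ^ 2 / 2) := by
        rw [Real.exp_add, gpdf, gpdf]; ring
    _ < c * c * Real.exp (-(s - m₁) ^ 2 / 2 + -(t - m₂) ^ 2 / 2) := by
        gcongr
    _ = gpdf (s - m₁) * gpdf (t - m₂) := by
        rw [Real.exp_add, gpdf, gpdf]; ring

theorem truncGaussCDF_eq_standardize (μ σ a b x : ℝ) :
    truncGaussCDF μ σ a b x = truncGaussCDF (μ / σ) 1 (a / σ) (b / σ) (x / σ) := by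
  simp only [truncGaussCDF, div_one, sub_div]

theorem truncGaussCDF_one_eq (m A B X : ℝ) :
    truncGaussCDF m 1 A B X = (∫ s in A..X, gpdf (s - m)) /
      ((∫ s in A..X, gpdf (s - m)) + ∫ s in X..B, gpdf (s - m)) := by
  simp only [truncGaussCDF, div_one, intervalIntegral.integral_comp_sub_right, ← gcdf_sub_gcdf]
  ring_nf

theorem strictAnti_truncGaussCDF_one {A B X : ℝ} (hAX : A < X) (hXB : X < B) :
    StrictAnti fun m => truncGaussCDF m 1 A B X := by
  intro m₁ m₂ hm
  have hcont (m : ℝ) : Continuous fun s => gpdf (s - m) :=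
    continuous_gpdf.comp (continuous_sub_right m)
  have hpos (m : ℝ) {l u : ℝ} (hlu : l < u) : 0 < ∫ s in l..u, gpdf (s - m) :=
    intervalIntegral.intervalIntegral_pos_of_pos_on ((hcont m).intervalIntegrable _ _)
      (fun _ _ => gpdf_pos _) hlu
  simp only [truncGaussCDF_one_eq]
  exact div_add_lt_div_add_of_mul_lt_mul
    (add_pos (hpos m₁ hAX) (hpos m₁ hXB)) (add_pos (hpos m₂ hAX) (hpos m₂ hXB))
    (integral_mul_integral_lt_of_mul_lt_mul ((hcont m₁).intervalIntegrable _ _)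
      ((hcont m₂).intervalIntegrable _ _) (fun _ _ hst => gpdf_sub_mul_gpdf_sub_lt hst hm) hAX hXB)

theorem truncGaussCDF_strictAnti_in_location_general
    (σ a b x : ℝ) (hσ : 0 < σ) (hax : a < x) (hxb : x < b) :
    StrictAnti (fun μ : ℝ => truncGaussCDF μ σ a b x) ∧
    ∀ p ∈ Set.Ioo (0 : ℝ) 1, ∀ μ₁ μ₂ : ℝ,
      truncGaussCDF μ₁ σ a b x = p → truncGaussCDF μ₂ σ a b x = p → μ₁ = μ₂ := by
  have hanti : StrictAnti fun μ : ℝ => truncGaussCDF μ σ a b x := by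
    rw [show (fun μ => truncGaussCDF μ σ a b x)
        = (fun m => truncGaussCDF m 1 (a / σ) (b / σ) (x / σ)) ∘ (· / σ) from
      funext fun μ => truncGaussCDF_eq_standardize μ σ a b x]
    exact (strictAnti_truncGaussCDF_one (div_lt_div_of_pos_right hax hσ)
      (div_lt_div_of_pos_right hxb hσ)).comp_strictMono (strictMono_div_right_of_pos hσ)
  exact ⟨hanti, fun _ _ μ₁ μ₂ h₁ h₂ => hanti.injective (h₁.trans h₂.symm)⟩

/-- Monotonicity in the location parameter of the truncated Gaussian CDF: for fixed
`σ > 0`, `a < x < b`, the map `μ ↦ F^{[a,b]}_{μ,σ²}(x)` is strictly decreasing on `ℝ`;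
consequently, for each `p ∈ (0,1)` the equation `F^{[a,b]}_{μ,σ²}(x) = p` has at most one
solution `μ`, so the post-selection confidence limits are uniquely determined when they
exist. -/
theorem truncGaussCDF_strictAnti_in_location
    (σ a b x : ℝ) (hσ : 0 < σ) (hab : a < b) (hax : a < x) (hxb : x < b) :
    StrictAnti (fun μ : ℝ => truncGaussCDF μ σ a b x) ∧
    ∀ p ∈ Set.Ioo (0 : ℝ) 1, ∀ μ₁ μ₂ : ℝ,
      truncGaussCDF μ₁ σ a b x = p → truncGaussCDF μ₂ σ a b x = p → μ₁ = μ₂ :=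
  truncGaussCDF_strictAnti_in_location_general σ a b x hσ hax hxb
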